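/- arXiv:2508.14991 — 2 statements merged into one kernel-verified Lean document; each statement's English description precedes it below -/
import Mathlib

section
/- Let $M = \mathbb{C}^{d\times d}$ with delta-form $\delta(x) = d\,\mathrm{tr}(x\sigma)$, inner product $\langle x,y\rangle = \delta(y^*x)$, and let $\{t_j\}$ be any orthonormal basis of $M$ with respect to this inner product. Then for every $x \in M$, the adjoint of multiplication satisfies $m^*(x) = \sum_j t_j \otimes t_j^* x = \sum_j x t_j \otimes t_j^*$. -/
open Matrix ComplexOrder
open scoped TensorProduct

/-- The delta-form `δ(x) = d · tr(x σ)` as a linear functional on `ℂ^{d×d}`. -/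
noncomputable def deltaL (d : ℕ) (σ : Matrix (Fin d) (Fin d) ℂ) :
    Matrix (Fin d) (Fin d) ℂ →ₗ[ℂ] ℂ :=
  (d : ℂ) • ((Matrix.traceLinearMap (Fin d) ℂ ℂ).comp (LinearMap.mulRight ℂ σ))

/-- The linear functional `x ↦ δ(c^* x) = ⟨x, c⟩`. -/
noncomputable def innerFun (d : ℕ) (σ c : Matrix (Fin d) (Fin d) ℂ) :
    Matrix (Fin d) (Fin d) ℂ →ₗ[ℂ] ℂ :=
  (deltaL d σ).comp (LinearMap.mulLeft ℂ c.conjTranspose)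

/-- The linear functional on `M ⊗ M` given by pairing with the pure tensor
`c ⊗ e` for the product inner product: `u ↦ ⟨u, c ⊗ e⟩`. -/
noncomputable def innerTensorFun (d : ℕ) (σ c e : Matrix (Fin d) (Fin d) ℂ) :
    Matrix (Fin d) (Fin d) ℂ ⊗[ℂ] Matrix (Fin d) (Fin d) ℂ →ₗ[ℂ] ℂ :=
  TensorProduct.lift ((LinearMap.mul ℂ ℂ).compl₁₂ (innerFun d σ c) (innerFun d σ e))

/-! Pairing with the products `t i ⊗ t k` of an orthonormal basis determines a tensor, and
`⟨m^*(x), t i ⊗ t k⟩ = δ(t k^* t i^* x)`. For the first sum this is immediate from orthonormality.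
For the second, the modular property `δ(a b) = δ(b σ a σ⁻¹)` of the delta-form identifies
`⟨t j^*, t k⟩` with the `j`-th coordinate of `σ t k^* σ⁻¹`, so the sum over `j` recombines
into `δ(t i^* x σ t k^* σ⁻¹) = δ(t k^* t i^* x)`. -/

section Biorthogonal

variable {R V W ι κ : Type*} [CommSemiring R] [AddCommMonoid V] [Module R V]
  [AddCommMonoid W] [Module R W] {t : ι → V}

theorem span_range_tmul_eq_top {s : κ → W} (ht : Submodule.span R (Set.range t) = ⊤)
    (hs : Submodule.span R (Set.range s) = ⊤) :
    Submodule.span R (Set.range fun p : ι × κ => t p.1 ⊗ₜ[R] s p.2) = ⊤ := by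
  rw [← TensorProduct.map₂_mk_top_top_eq_top, ← ht, ← hs, Submodule.map₂_span_span,
    Set.image2_range]
  rfl

variable [Fintype ι] [DecidableEq ι] [Fintype κ] [DecidableEq κ] {f : ι → Module.Dual R V}

theorem sum_apply_smul_eq_of_biorthogonal (hf : ∀ p q, f q (t p) = if p = q then 1 else 0)
    (ht : Submodule.span R (Set.range t) = ⊤) (y : V) : ∑ k, f k y • t k = y := by
  obtain ⟨a, rfl⟩ :=
    (Submodule.mem_span_range_iff_exists_fun R).1 (ht ▸ Submodule.mem_top (x := y))
  refine Finset.sum_congr rfl fun k _ => ?_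
  simp [hf]

theorem eq_of_forall_apply_eq_of_biorthogonal (hf : ∀ p q, f q (t p) = if p = q then 1 else 0)
    (ht : Submodule.span R (Set.range t) = ⊤) {u v : V} (h : ∀ k, f k u = f k v) : u = v := by
  rw [← sum_apply_smul_eq_of_biorthogonal hf ht u, ← sum_apply_smul_eq_of_biorthogonal hf ht v]
  simp only [h]

theorem TensorProduct.eq_of_forall_dualDistrib_eq_of_biorthogonal
    (hf : ∀ p q, f q (t p) = if p = q then 1 else 0) (ht : Submodule.span R (Set.range t) = ⊤)
    {g : κ → Module.Dual R W} {s : κ → W} (hg : ∀ p q, g q (s p) = if p = q then 1 else 0)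
    (hs : Submodule.span R (Set.range s) = ⊤) {u v : V ⊗[R] W}
    (h : ∀ i j, TensorProduct.dualDistrib R V W (f i ⊗ₜ g j) u =
      TensorProduct.dualDistrib R V W (f i ⊗ₜ g j) v) : u = v := by
  refine eq_of_forall_apply_eq_of_biorthogonal (fun p q => ?_) (span_range_tmul_eq_top ht hs)
    fun k => h k.1 k.2
  rw [TensorProduct.dualDistrib_apply, hf, hg, ite_zero_mul_ite_zero, mul_one]
  simp only [Prod.ext_iff]

end Biorthogonal

theorem deltaL_apply (d : ℕ) (σ y : Matrix (Fin d) (Fin d) ℂ) :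
    deltaL d σ y = d * (y * σ).trace := by
  simp [deltaL]

theorem deltaL_mul_comm {d : ℕ} {σ : Matrix (Fin d) (Fin d) ℂ} (hσ : IsUnit σ.det)
    (a b : Matrix (Fin d) (Fin d) ℂ) : deltaL d σ (a * b) = deltaL d σ (b * (σ * a * σ⁻¹)) := by
  rw [deltaL_apply, deltaL_apply, mul_assoc b, mul_assoc (σ * a), nonsing_inv_mul σ hσ, mul_one,
    ← mul_assoc, mul_assoc a, trace_mul_comm a]

theorem innerTensorFun_eq_dualDistrib (d : ℕ) (σ c e : Matrix (Fin d) (Fin d) ℂ) :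
    innerTensorFun d σ c e = TensorProduct.dualDistrib ℂ _ _ (innerFun d σ c ⊗ₜ innerFun d σ e) :=
  TensorProduct.ext' fun _ _ => rfl

theorem innerFun_apply (d : ℕ) (σ c x : Matrix (Fin d) (Fin d) ℂ) :
    innerFun d σ c x = deltaL d σ (cᴴ * x) := rfl

theorem innerTensorFun_tmul (d : ℕ) (σ c e a b : Matrix (Fin d) (Fin d) ℂ) :
    innerTensorFun d σ c e (a ⊗ₜ b) = innerFun d σ c a * innerFun d σ e b := rfl

theorem innerFun_mul (d : ℕ) (σ c e x : Matrix (Fin d) (Fin d) ℂ) :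
    innerFun d σ (c * e) x = innerFun d σ e (cᴴ * x) := by
  rw [innerFun_apply, innerFun_apply, conjTranspose_mul, mul_assoc]

theorem stmt2_general (d : ℕ) (σ : Matrix (Fin d) (Fin d) ℂ)
    (hσ : σ.PosDef)
    (κ : Type) [Fintype κ] [DecidableEq κ] (t : κ → Matrix (Fin d) (Fin d) ℂ)
    (ht_on : ∀ p q : κ, deltaL d σ ((t q).conjTranspose * t p) = if p = q then 1 else 0)
    (ht_span : Submodule.span ℂ (Set.range t) = ⊤)
    (ms : Matrix (Fin d) (Fin d) ℂ →ₗ[ℂ]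
      Matrix (Fin d) (Fin d) ℂ ⊗[ℂ] Matrix (Fin d) (Fin d) ℂ)
    (hadj : ∀ x c e : Matrix (Fin d) (Fin d) ℂ,
      innerTensorFun d σ c e (ms x) = innerFun d σ (c * e) x) :
    ∀ x : Matrix (Fin d) (Fin d) ℂ,
      ms x = ∑ j : κ, t j ⊗ₜ[ℂ] ((t j).conjTranspose * x) ∧
      ms x = ∑ j : κ, (x * t j) ⊗ₜ[ℂ] (t j).conjTranspose := by
  have hσ_det : IsUnit σ.det := hσ.det_pos.ne'.isUnit
  have hbi : ∀ p q, innerFun d σ (t q) (t p) = if p = q then 1 else 0 := ht_on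
  have hext {u v}
      (h : ∀ i j, innerTensorFun d σ (t i) (t j) u = innerTensorFun d σ (t i) (t j) v) :
      u = v := by
    refine TensorProduct.eq_of_forall_dualDistrib_eq_of_biorthogonal hbi ht_span hbi ht_span ?_
    simpa only [innerTensorFun_eq_dualDistrib] using h
  intro x
  constructor <;> refine hext fun i k => ?_ <;> simp only [hadj, map_sum, innerTensorFun_tmul]
  · simp only [hbi, ite_mul, one_mul, zero_mul, Finset.sum_ite_eq', Finset.mem_univ, if_true,
      innerFun_mul]
  · set y := σ * (t k)ᴴ * σ⁻¹
    have hy (j) : innerFun d σ (t k) (t j)ᴴ = innerFun d σ (t j) y := deltaL_mul_comm hσ_det _ _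
    calc innerFun d σ (t i * t k) x
        = innerFun d σ (t i) (x * y) := by
          rw [innerFun_mul, innerFun_apply, innerFun_apply, deltaL_mul_comm hσ_det, mul_assoc]
      _ = innerFun d σ (t i) (x * ∑ j, innerFun d σ (t j) y • t j) := by
          rw [sum_apply_smul_eq_of_biorthogonal hbi ht_span]
      _ = ∑ j, innerFun d σ (t i) (x * t j) * innerFun d σ (t k) (t j)ᴴ := by
          simp only [Matrix.mul_sum, Matrix.mul_smul, map_sum, map_smul, smul_eq_mul, hy, mul_comm]

/-- with `{t j}` any orthonormal basis of `M = ℂ^{d×d}` for the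
delta-form inner product `⟨x,y⟩ = δ(y^* x)` and `ms` the adjoint of the
multiplication map, one has `m^*(x) = ∑ j, t j ⊗ (t j)^* x = ∑ j, x t j ⊗ (t j)^*`. -/
theorem stmt2 (d : ℕ) (hd : 0 < d) (σ : Matrix (Fin d) (Fin d) ℂ)
    (hσ : σ.PosDef) (htr : (σ⁻¹).trace = (d : ℂ))
    (κ : Type) [Fintype κ] [DecidableEq κ] (t : κ → Matrix (Fin d) (Fin d) ℂ)
    (ht_on : ∀ p q : κ, deltaL d σ ((t q).conjTranspose * t p) = if p = q then 1 else 0)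
    (ht_span : Submodule.span ℂ (Set.range t) = ⊤)
    (ms : Matrix (Fin d) (Fin d) ℂ →ₗ[ℂ]
      Matrix (Fin d) (Fin d) ℂ ⊗[ℂ] Matrix (Fin d) (Fin d) ℂ)
    (hadj : ∀ x c e : Matrix (Fin d) (Fin d) ℂ,
      innerTensorFun d σ c e (ms x) = innerFun d σ (c * e) x) :
    ∀ x : Matrix (Fin d) (Fin d) ℂ,
      ms x = ∑ j : κ, t j ⊗ₜ[ℂ] ((t j).conjTranspose * x) ∧
      ms x = ∑ j : κ, (x * t j) ⊗ₜ[ℂ] (t j).conjTranspose :=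
  stmt2_general d σ hσ κ t ht_on ht_span ms hadj
end

section
/- Let $M = \bigoplus_{i \in I} \mathbb{C}^{d_i\times d_i}$ be a finite direct sum of matrix algebras with delta-form $\delta$ given by $\sigma$. Define the conditional expectation $\mathfrak{e}: M \to Z(M)$ by $\mathfrak{e}(x) = \sum_{y \in B} y x y^*$, where $B$ is any orthonormal basis of $M$ with respect to $\langle x,y\rangle = \delta(y^*x)$. Then for $x \in M_i$ one has $\mathfrak{e}(x) = \frac{\mathrm{tr}(x\sigma_i^{-1})}{d_i} 1_i$; in particular $\mathfrak{e}$ is independent of the choice of orthonormal basis. -/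
open Matrix ComplexOrder

/-- The delta-form on a finite direct sum of matrix algebras, determined by a
block-diagonal `σ`: `δ(x) = ∑ i, d i · tr(x i * σ i)`. -/
noncomputable def deltaFormPi {ι : Type} [Fintype ι] (d : ι → ℕ)
    (σ : ∀ i, Matrix (Fin (d i)) (Fin (d i)) ℂ)
    (x : ∀ i, Matrix (Fin (d i)) (Fin (d i)) ℂ) : ℂ :=
  ∑ i, (d i : ℂ) * (x i * σ i).trace

/-! Write `Bₚ` for the `i`-th block of `b p`. Only the `i`-th block of `∑ₚ bₚ x bₚ*` is nonzero,
and it equals `∑ₚ Bₚ m Bₚᴴ`. Pairing with `Pi.single i (σᵢ⁻¹ X)` and `Pi.single i (Y σᵢ⁻¹)`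
under `δ` extracts `dᵢ tr(X Bₚ)` and `dᵢ tr(Bₚᴴ Y)`, so Parseval's identity for the orthonormal
basis yields the completeness relation `dᵢ ∑ₚ tr(X Bₚ) tr(Bₚᴴ Y) = tr(σᵢ⁻¹ X Y)`. On matrix units
it reads `dᵢ ∑ₚ (Bₚ)ᵣₖ conj (Bₚ)ₛₗ = [r = s] (σᵢ⁻¹)ₗₖ`, and contracting with `m` gives the
scalar matrix `tr(m σᵢ⁻¹) / dᵢ • 1`. -/

section Orthonormal

variable {R V κ : Type*} [CommSemiring R] [AddCommMonoid V] [Module R V] [Fintype κ]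
  [DecidableEq κ] (f : V → V →ₗ[R] R) {b : κ → V}

theorem sum_apply_smul_eq_self_of_orthonormal
    (hb_on : ∀ p q, f (b q) (b p) = if p = q then 1 else 0)
    (hb_span : Submodule.span R (Set.range b) = ⊤) (u : V) :
    ∑ p, f (b p) u • b p = u := by
  suffices h : ∑ p, (f (b p)).smulRight (b p) = LinearMap.id by
    simpa using LinearMap.congr_fun h u
  refine LinearMap.ext_on_range hb_span fun q => ?_
  simp [hb_on]

theorem sum_apply_mul_apply_eq_of_orthonormal
    (hb_on : ∀ p q, f (b q) (b p) = if p = q then 1 else 0)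
    (hb_span : Submodule.span R (Set.range b) = ⊤) (u w : V) :
    ∑ p, f (b p) u * f w (b p) = f w u := by
  conv_rhs => rw [← sum_apply_smul_eq_self_of_orthonormal f hb_on hb_span u]
  simp [mul_comm]

end Orthonormal

theorem sum_mul_single_mul_star {ι κ : Type*} [DecidableEq ι] [Fintype κ] {A : ι → Type*}
    [∀ i, NonUnitalNonAssocSemiring (A i)] [∀ i, Star (A i)] (b : κ → ∀ i, A i) (i : ι)
    (m : A i) :
    ∑ p, b p * Pi.single i m * star (b p) = Pi.single i (∑ p, b p i * m * star (b p i)) := by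
  have hterm : ∀ p, b p * Pi.single i m * star (b p) = Pi.single i (b p i * m * star (b p i)) :=
    fun p => by rw [← Pi.single_mul_right, ← Pi.single_mul_left]; rfl
  simp only [hterm]
  exact (map_sum (AddMonoidHom.single A i) _ _).symm

section BlockAlgebra

variable {ι : Type} [Fintype ι] {d : ι → ℕ} (σ : ∀ i, Matrix (Fin (d i)) (Fin (d i)) ℂ)

/-- `deltaPairing σ v u = ⟨u, v⟩ = δ(v* u)`, bundled as a linear map in `u`. -/
noncomputable def deltaPairing (v : ∀ i, Matrix (Fin (d i)) (Fin (d i)) ℂ) :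
    (∀ i, Matrix (Fin (d i)) (Fin (d i)) ℂ) →ₗ[ℂ] ℂ where
  toFun u := deltaFormPi d σ (star v * u)
  map_add' u w := by simp [deltaFormPi, mul_add, Matrix.add_mul, Finset.sum_add_distrib]
  map_smul' c u := by simp [deltaFormPi, Finset.mul_sum, mul_left_comm]

theorem deltaPairing_apply (v u : ∀ i, Matrix (Fin (d i)) (Fin (d i)) ℂ) :
    deltaPairing σ v u = deltaFormPi d σ (star v * u) := rfl

variable [DecidableEq ι]

theorem deltaFormPi_single (i : ι) (A : Matrix (Fin (d i)) (Fin (d i)) ℂ) :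
    deltaFormPi d σ (Pi.single i A) = d i * (A * σ i).trace := by
  rw [deltaFormPi, Finset.sum_eq_single i (fun j _ hj => by simp [Pi.single_eq_of_ne hj])
    (by simp)]
  simp

variable {σ} {i : ι}

theorem deltaFormPi_single_inv_mul_mul (hσ : IsUnit (σ i).det)
    (A : Matrix (Fin (d i)) (Fin (d i)) ℂ) (u : ∀ j, Matrix (Fin (d j)) (Fin (d j)) ℂ) :
    deltaFormPi d σ (Pi.single i ((σ i)⁻¹ * A) * u) = d i * (A * u i).trace := by
  rw [← Pi.single_mul_left, deltaFormPi_single, Matrix.mul_assoc, Matrix.mul_assoc,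
    Matrix.trace_mul_comm, Matrix.mul_assoc, Matrix.mul_assoc, mul_nonsing_inv _ hσ,
    Matrix.mul_one]

theorem deltaFormPi_mul_single_mul_inv (hσ : IsUnit (σ i).det)
    (u : ∀ j, Matrix (Fin (d j)) (Fin (d j)) ℂ) (A : Matrix (Fin (d i)) (Fin (d i)) ℂ) :
    deltaFormPi d σ (u * Pi.single i (A * (σ i)⁻¹)) = d i * (u i * A).trace := by
  rw [← Pi.single_mul_right, deltaFormPi_single, Matrix.mul_assoc, Matrix.mul_assoc,
    nonsing_inv_mul _ hσ, Matrix.mul_one]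

variable {κ : Type} [Fintype κ] [DecidableEq κ] {b : κ → ∀ i, Matrix (Fin (d i)) (Fin (d i)) ℂ}

theorem mul_sum_trace_mul_trace_conjTranspose_mul (hd : d i ≠ 0) (hσ : IsUnit (σ i).det)
    (hb_on : ∀ p q : κ, deltaFormPi d σ (star (b q) * b p) = if p = q then 1 else 0)
    (hb_span : Submodule.span ℂ (Set.range b) = ⊤) (X Y : Matrix (Fin (d i)) (Fin (d i)) ℂ) :
    d i * ∑ p, (X * b p i).trace * ((b p i)ᴴ * Y).trace = ((σ i)⁻¹ * X * Y).trace := by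
  have h := sum_apply_mul_apply_eq_of_orthonormal (deltaPairing σ) hb_on hb_span
    (Pi.single i (Y * (σ i)⁻¹)) (star (Pi.single i ((σ i)⁻¹ * X)))
  simp only [deltaPairing_apply, star_star, deltaFormPi_mul_single_mul_inv hσ,
    deltaFormPi_single_inv_mul_mul hσ, Pi.single_eq_same] at h
  apply mul_left_cancel₀ (Nat.cast_ne_zero.mpr hd : (d i : ℂ) ≠ 0)
  rw [← h, Finset.mul_sum, Finset.mul_sum]
  refine Finset.sum_congr rfl fun p _ => ?_
  simp only [Pi.star_apply, star_eq_conjTranspose]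
  ring

theorem sum_mul_mul_conjTranspose_eq_smul_one (hσ : IsUnit (σ i).det)
    (hb_on : ∀ p q : κ, deltaFormPi d σ (star (b q) * b p) = if p = q then 1 else 0)
    (hb_span : Submodule.span ℂ (Set.range b) = ⊤) (m : Matrix (Fin (d i)) (Fin (d i)) ℂ) :
    ∑ p, b p i * m * (b p i)ᴴ = ((m * (σ i)⁻¹).trace / d i) • 1 := by
  ext r s
  have hd : d i ≠ 0 := (Fin.pos_iff_nonempty.mpr ⟨r⟩).ne'
  have hentry : ∀ k l, ∑ p, b p i r k * star (b p i s l) =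
      (if r = s then (σ i)⁻¹ l k else 0) / d i := by
    intro k l
    have h := mul_sum_trace_mul_trace_conjTranspose_mul hd hσ hb_on hb_span
      (single k r 1) (single s l 1)
    simp only [trace_single_mul, trace_mul_single, one_smul, MulOpposite.op_one,
      conjTranspose_apply] at h
    rw [eq_div_iff (Nat.cast_ne_zero.mpr hd), mul_comm, h]
    by_cases hrs : r = s <;> simp [mul_apply, single, hrs]
  calc (∑ p, b p i * m * (b p i)ᴴ) r s
      = ∑ l, ∑ k, m k l * ∑ p, b p i r k * star (b p i s l) := by
        simp only [Matrix.sum_apply, mul_apply, conjTranspose_apply, Finset.mul_sum,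
          Finset.sum_mul]
        rw [Finset.sum_comm]
        refine Finset.sum_congr rfl fun l _ => ?_
        rw [Finset.sum_comm]
        exact Finset.sum_congr rfl fun _ _ => Finset.sum_congr rfl fun _ _ => by ring
    _ = (((m * (σ i)⁻¹).trace / d i) • (1 : Matrix (Fin (d i)) (Fin (d i)) ℂ)) r s := by
        simp only [hentry]
        rcases eq_or_ne r s with rfl | hrs
        · simp only [if_true, trace, diag_apply, mul_apply, Finset.sum_div, mul_div_assoc,
            Matrix.smul_apply, one_apply_eq, smul_eq_mul, mul_one]
          exact Finset.sum_comm
        · simp [hrs]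

end BlockAlgebra

theorem stmt6_general {ι : Type} [Fintype ι] [DecidableEq ι] (d : ι → ℕ)
    (σ : ∀ i, Matrix (Fin (d i)) (Fin (d i)) ℂ)
    (hσ : ∀ i, (σ i).PosDef)
    (κ : Type) [Fintype κ] [DecidableEq κ]
    (b : κ → ∀ i, Matrix (Fin (d i)) (Fin (d i)) ℂ)
    (hb_on : ∀ p q : κ, deltaFormPi d σ (star (b q) * b p) = if p = q then 1 else 0)
    (hb_span : Submodule.span ℂ (Set.range b) = ⊤)
    (i : ι) (m : Matrix (Fin (d i)) (Fin (d i)) ℂ) :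
    (∑ p : κ, b p * Pi.single i m * star (b p)) =
      ((m * (σ i)⁻¹).trace / (d i : ℂ)) •
        (Pi.single i (1 : Matrix (Fin (d i)) (Fin (d i)) ℂ) :
          ∀ j, Matrix (Fin (d j)) (Fin (d j)) ℂ) := by
  have hσi : IsUnit (σ i).det := (isUnit_iff_isUnit_det _).mp (hσ i).isUnit
  rw [sum_mul_single_mul_star]
  simp only [star_eq_conjTranspose, sum_mul_mul_conjTranspose_eq_smul_one hσi hb_on hb_span,
    Pi.single_smul]

/-- for any orthonormal basis `b` of `M = ⨁ i, ℂ^{d i × d i}` with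
respect to `⟨x,y⟩ = δ(y^* x)`, and any `x = Pi.single i m` supported in the
`i`-th block, the conditional expectation `𝔢(x) = ∑_{y ∈ B} y x y^*` equals
`(tr(m σ i⁻¹)/d i) 1_i`; in particular it does not depend on the basis. -/
theorem stmt6 {ι : Type} [Fintype ι] [DecidableEq ι] (d : ι → ℕ) (hd : ∀ i, 0 < d i)
    (σ : ∀ i, Matrix (Fin (d i)) (Fin (d i)) ℂ)
    (hσ : ∀ i, (σ i).PosDef) (htr : ∀ i, ((σ i)⁻¹).trace = (d i : ℂ))
    (κ : Type) [Fintype κ] [DecidableEq κ]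
    (b : κ → ∀ i, Matrix (Fin (d i)) (Fin (d i)) ℂ)
    (hb_on : ∀ p q : κ, deltaFormPi d σ (star (b q) * b p) = if p = q then 1 else 0)
    (hb_span : Submodule.span ℂ (Set.range b) = ⊤)
    (i : ι) (m : Matrix (Fin (d i)) (Fin (d i)) ℂ) :
    (∑ p : κ, b p * Pi.single i m * star (b p)) =
      ((m * (σ i)⁻¹).trace / (d i : ℂ)) •
        (Pi.single i (1 : Matrix (Fin (d i)) (Fin (d i)) ℂ) :
          ∀ j, Matrix (Fin (d j)) (Fin (d j)) ℂ) :=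
  stmt6_general d σ hσ κ b hb_on hb_span i m
end
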